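/- As a corollary of the transient fluctuation symmetry, the distribution at time n of the chain started from ρ0 satisfies ρ_n(x) = ρ0(x) · E_x[e^{−S}], where E_x is the expectation over paths of length n started from the fixed state x and S is the time-antisymmetric action S(ω) = log[ρ0(x_0)∏_k P(x_k,x_{k+1})] − log[ρ0(x_n)∏_k P(x_{k+1},x_k)]. -/

import Mathlib

/-!
Reversing a path `σ ↦ σ ∘ Fin.rev` is a bijection of path space that exchanges `σ 0` with
`σ (Fin.last n)` and the forward with the backward transition product. Since
`e^{-S}` is the ratio of the backward to the forward weight, the weight
`ρ0(σ 0) · ∏ P(forward) · e^{-S(σ)}` of a path started at `x` equals the weight of its reversal,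
which ends at `x`; summing over paths gives the identity.
-/

open Finset Real

theorem Fin.prod_rev_castSucc_rev_succ {M α : Type*} [CommMonoid M] {n : ℕ}
    (f : α → α → M) (σ : Fin (n + 1) → α) :
    ∏ k : Fin n, f (σ k.castSucc.rev) (σ k.succ.rev)
      = ∏ k : Fin n, f (σ k.succ) (σ k.castSucc) := by
  simp only [Fin.rev_castSucc, Fin.rev_succ]
  exact Equiv.prod_comp Fin.revPerm fun k => f (σ k.succ) (σ k.castSucc)

theorem Fintype.sum_comp_rev {M α : Type*} [AddCommMonoid M] [Fintype α]
    {n : ℕ} (g : (Fin n → α) → M) :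
    ∑ σ : Fin n → α, g (σ ∘ Fin.rev) = ∑ σ : Fin n → α, g σ :=
  Equiv.sum_comp (Fin.revPerm.arrowCongr (Equiv.refl α)) g

theorem Real.mul_exp_neg_log_sub_log {a b : ℝ} (ha : 0 < a) (hb : 0 < b) :
    a * exp (-(log a - log b)) = b := by
  rw [neg_sub, exp_sub, exp_log ha, exp_log hb]
  field_simp

theorem time_n_density_from_fluctuation_symmetry_general
    {Ω : Type*} [Fintype Ω] [DecidableEq Ω]
    (n : ℕ)
    (P : Ω → Ω → ℝ) (hP : ∀ x y, 0 < P x y)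
    (ρ0 : Ω → ℝ) (hρ0 : ∀ x, 0 < ρ0 x)
    (S : (Fin (n + 1) → Ω) → ℝ)
    (hS : ∀ σ : Fin (n + 1) → Ω, S σ =
      Real.log (ρ0 (σ 0) * ∏ k : Fin n, P (σ k.castSucc) (σ k.succ))
      - Real.log (ρ0 (σ (Fin.last n)) * ∏ k : Fin n, P (σ k.succ) (σ k.castSucc)))
    (x : Ω) :
    (∑ σ : Fin (n + 1) → Ω, if σ (Fin.last n) = x then
        ρ0 (σ 0) * ∏ k : Fin n, P (σ k.castSucc) (σ k.succ) else 0)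
      = ρ0 x * ∑ σ : Fin (n + 1) → Ω, if σ 0 = x then
          (∏ k : Fin n, P (σ k.castSucc) (σ k.succ)) * Real.exp (- S σ) else 0 := by
  have weight_eq_reverse_weight : ∀ σ : Fin (n + 1) → Ω, σ 0 = x →
      ρ0 x * ((∏ k : Fin n, P (σ k.castSucc) (σ k.succ)) * exp (-S σ))
        = ρ0 (σ (Fin.last n)) * ∏ k : Fin n, P (σ k.succ) (σ k.castSucc) := by
    rintro σ rfl
    rw [← mul_assoc, hS σ]
    exact mul_exp_neg_log_sub_log (mul_pos (hρ0 _) (prod_pos fun _ _ => hP _ _))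
      (mul_pos (hρ0 _) (prod_pos fun _ _ => hP _ _))
  rw [mul_sum, ← Fintype.sum_comp_rev]
  refine Fintype.sum_congr _ _ fun σ => ?_
  simp only [Function.comp_apply, Fin.rev_last, Fin.rev_zero, mul_ite, mul_zero]
  split_ifs with h
  · rw [weight_eq_reverse_weight _ h, Fin.prod_rev_castSucc_rev_succ]
  · rfl

/-- Corollary of the transient fluctuation symmetry:
`ρ_n(x) = ρ0(x) E_x[e^{−S}]`. -/
theorem time_n_density_from_fluctuation_symmetry
    {Ω : Type*} [Fintype Ω] [DecidableEq Ω]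
    (n : ℕ)
    (P : Ω → Ω → ℝ) (hP : ∀ x y, 0 < P x y) (hstoch : ∀ x, ∑ y, P x y = 1)
    (ρ0 : Ω → ℝ) (hρ0 : ∀ x, 0 < ρ0 x) (hnorm : ∑ x, ρ0 x = 1)
    (S : (Fin (n + 1) → Ω) → ℝ)
    (hS : ∀ σ : Fin (n + 1) → Ω, S σ =
      Real.log (ρ0 (σ 0) * ∏ k : Fin n, P (σ k.castSucc) (σ k.succ))
      - Real.log (ρ0 (σ (Fin.last n)) * ∏ k : Fin n, P (σ k.succ) (σ k.castSucc)))
    (x : Ω) :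
    (∑ σ : Fin (n + 1) → Ω, if σ (Fin.last n) = x then
        ρ0 (σ 0) * ∏ k : Fin n, P (σ k.castSucc) (σ k.succ) else 0)
      = ρ0 x * ∑ σ : Fin (n + 1) → Ω, if σ 0 = x then
          (∏ k : Fin n, P (σ k.castSucc) (σ k.succ)) * Real.exp (- S σ) else 0 :=
  time_n_density_from_fluctuation_symmetry_general n P hP ρ0 hρ0 S hS x
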